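/- arXiv:1104.3778 — 8 statements merged into one kernel-verified Lean document; each statement's English description precedes it below -/
import Mathlib

section
/- Let r ≥ 1, let n : Fin r → ℕ and α : Fin r → ℝ be such that the values n_j + α_j are pairwise distinct, and define q(x) = ∏_{j} (x - α_j) and Q(x) = ∏_{j} (x - n_j - α_j). Then ∑_{j=1}^r q(n_j + α_j) / Q'(n_j + α_j) = n_1 + ⋯ + n_r, where Q' is the derivative of Q. -/
open Polynomial Finset

theorem stmt_0 (r : ℕ) (hr : 1 ≤ r) (n : Fin r → ℕ) (α : Fin r → ℝ)
    (hd : Function.Injective (fun j : Fin r => (n j : ℝ) + α j))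
    (q Q : Polynomial ℝ)
    (hq : q = ∏ j : Fin r, (X - C (α j)))
    (hQ : Q = ∏ j : Fin r, (X - C ((n j : ℝ) + α j))) :
    ∑ j : Fin r, q.eval ((n j : ℝ) + α j) / Q.derivative.eval ((n j : ℝ) + α j)
      = ∑ j : Fin r, (n j : ℝ) := by
  classical
  set β : Fin r → ℝ := fun j => (n j : ℝ) + α j with hβ
  have hinj : Set.InjOn β (univ : Finset (Fin r)) := fun a _ b _ h => hd h
  have hcard : #(univ : Finset (Fin r)) = r := by simp
  have hQn : Q = Lagrange.nodal univ β := by rw [hQ, Lagrange.nodal_eq]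
  -- derivative evaluation
  have hder : ∀ i : Fin r, Q.derivative.eval (β i) = ∏ j ∈ univ.erase i, (β i - β j) := by
    intro i
    rw [hQn, Lagrange.eval_nodal_derivative_eval_node_eq (mem_univ i), Lagrange.eval_nodal]
  -- distinctness
  have hne : ∀ i : Fin r, ∀ j ∈ univ.erase i, β i - β j ≠ 0 := by
    intro i j hj
    rw [sub_ne_zero]
    exact fun h => (mem_erase.mp hj).1 (hd h.symm)
  -- degrees
  have hqm : q.Monic := hq ▸ monic_prod_of_monic _ _ fun i _ => monic_X_sub_C _
  have hQm : Q.Monic := hQ ▸ monic_prod_of_monic _ _ fun i _ => monic_X_sub_C _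
  have hqd : q.natDegree = r := by
    rw [hq, natDegree_prod_of_monic _ _ fun i _ => monic_X_sub_C _]
    simp only [natDegree_X_sub_C, sum_const, card_univ, Fintype.card_fin, smul_eq_mul, mul_one]
  have hQd : Q.natDegree = r := by
    rw [hQ, natDegree_prod_of_monic _ _ fun i _ => monic_X_sub_C _]
    simp only [natDegree_X_sub_C, sum_const, card_univ, Fintype.card_fin, smul_eq_mul, mul_one]
  have hdegP : (q - Q).degree < (#(univ : Finset (Fin r)) : WithBot ℕ) := by
    rw [hcard]
    calc (q - Q).degree < q.degree :=
        degree_sub_lt (by rw [degree_eq_natDegree hqm.ne_zero, degree_eq_natDegree hQm.ne_zero,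
            hqd, hQd]) hqm.ne_zero (by rw [hqm.leadingCoeff, hQm.leadingCoeff])
      _ = (r : WithBot ℕ) := by rw [degree_eq_natDegree hqm.ne_zero, hqd]
  have hint := Lagrange.eq_interpolate hinj hdegP
  have hc := congrArg (fun p : Polynomial ℝ => p.coeff (r - 1)) hint
  simp only [Lagrange.interpolate_apply, finset_sum_coeff] at hc
  -- compute coeff of each basis term
  have hbasis : ∀ i : Fin r,
      (C ((q - Q).eval (β i)) * Lagrange.basis univ β i).coeff (r - 1)
        = (q - Q).eval (β i) * ∏ j ∈ univ.erase i, (β i - β j)⁻¹ := by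
    intro i
    have hb : Lagrange.basis univ β i
        = C (∏ j ∈ univ.erase i, (β i - β j)⁻¹) * Lagrange.nodal (univ.erase i) β := by
      rw [Lagrange.basis, Lagrange.nodal]
      simp_rw [Lagrange.basisDivisor]
      rw [prod_mul_distrib, ← map_prod]
    have hnod : (Lagrange.nodal (univ.erase i) β).coeff (r - 1) = 1 := by
      have h1 : (Lagrange.nodal (univ.erase i) β).natDegree = r - 1 := by
        rw [Lagrange.natDegree_nodal, card_erase_of_mem (mem_univ i), hcard]
      have := Lagrange.nodal_monic (s := univ.erase i) (v := β)
      rw [← h1]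
      exact this.coeff_natDegree
    rw [hb, ← mul_assoc, ← C_mul, coeff_C_mul, hnod, mul_one, mul_comm]
  rw [sum_congr rfl (fun i _ => hbasis i)] at hc
  -- eval of q - Q at nodes
  have hev : ∀ i : Fin r, (q - Q).eval (β i) = q.eval (β i) := by
    intro i
    rw [eval_sub, hQn, Lagrange.eval_nodal_at_node (mem_univ i), sub_zero]
  -- coeff of q - Q at r - 1
  have hcoeff : (q - Q).coeff (r - 1) = ∑ j : Fin r, (n j : ℝ) := by
    rw [coeff_sub, hq, hQ]
    have h1 := prod_X_sub_C_coeff_card_pred (univ : Finset (Fin r)) α (by rwa [hcard])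
    have h2 := prod_X_sub_C_coeff_card_pred (univ : Finset (Fin r))
      (fun j => (n j : ℝ) + α j) (by rwa [hcard])
    rw [hcard] at h1 h2
    rw [h1, h2, sum_add_distrib]
    ring
  rw [hcoeff] at hc
  rw [hc]
  refine sum_congr rfl fun i _ => ?_
  show q.eval (β i) / Q.derivative.eval (β i)
    = (q - Q).eval (β i) * ∏ j ∈ univ.erase i, (β i - β j)⁻¹
  rw [hev i, hder i, div_eq_mul_inv, ← prod_inv_distrib]
end

section
/- Let r ≥ 1, let n : Fin r → ℕ and α : Fin r → ℝ be such that the values n_j + α_j are pairwise distinct, and define q(x) = ∏_j (x - α_j) and Q(x) = ∏_j (x - n_j - α_j). Then ∑_{j=1}^r (n_j + α_j) · q(n_j + α_j) / Q'(n_j + α_j) = ∑_{j=1}^r n_j α_j + (|n|² + ∑_{j=1}^r n_j²)/2, where |n| = n_1 + ⋯ + n_r. -/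
open Polynomial Finset

lemma derivative_finset_prod {ι : Type*} [DecidableEq ι] (s : Finset ι) (f : ι → ℝ[X]) :
    Polynomial.derivative (∏ i ∈ s, f i)
      = ∑ i ∈ s, (∏ k ∈ s.erase i, f k) * Polynomial.derivative (f i) := by
  rw [Finset.prod_eq_multiset_prod, Polynomial.derivative_prod, Finset.sum_eq_multiset_sum]
  congr 1

-- L1: derivative of product evaluated at a node
lemma eval_derivative_prod_X_sub_C {ι : Type*} [DecidableEq ι] (s : Finset ι) (v : ι → ℝ)
    {j : ι} (hj : j ∈ s) :
    (Polynomial.derivative (∏ i ∈ s, (X - C (v i)))).eval (v j)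
      = ∏ i ∈ s.erase j, (v j - v i) := by
  rw [derivative_finset_prod, eval_finset_sum, Finset.sum_eq_single j]
  · simp [eval_prod]
  · intro i hi hij
    rw [derivative_sub, derivative_X, derivative_C, sub_zero, mul_one, eval_prod]
    apply Finset.prod_eq_zero (Finset.mem_erase.mpr ⟨Ne.symm hij, hj⟩)
    simp
  · intro h; exact absurd hj h

-- telescoping
lemma tele {R : Type*} [CommRing R] (a b : ℕ → R) (m : ℕ) :
    ∏ i ∈ Finset.range m, a i - ∏ i ∈ Finset.range m, b i
      = ∑ j ∈ Finset.range m,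
          (∏ i ∈ Finset.range j, b i) * (a j - b j) * ∏ i ∈ Finset.Ico (j+1) m, a i := by
  induction m with
  | zero => simp
  | succ m ih =>
    rw [Finset.sum_range_succ, Finset.prod_range_succ, Finset.prod_range_succ]
    have key : ∀ j ∈ Finset.range m,
        (∏ i ∈ Finset.range j, b i) * (a j - b j) * ∏ i ∈ Finset.Ico (j+1) (m+1), a i
          = ((∏ i ∈ Finset.range j, b i) * (a j - b j) * ∏ i ∈ Finset.Ico (j+1) m, a i) * a m := by
      intro j hj
      rw [Finset.mem_range] at hj
      rw [Finset.prod_Ico_succ_top (by omega)]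
      ring
    rw [Finset.sum_congr rfl key, ← Finset.sum_mul, ← ih, Finset.Ico_self, Finset.prod_empty]
    ring

-- swap lemma
lemma swap_sum (m : ℕ) (f : ℕ → ℝ) :
    ∑ j ∈ Finset.range m, f j * ∑ i ∈ Finset.range j, f i
      = ∑ j ∈ Finset.range m, f j * ∑ i ∈ Finset.Ico (j+1) m, f i := by
  simp_rw [Finset.mul_sum]
  have := Finset.sum_Ico_Ico_comm' 0 m (fun i j => f i * f j)
  simp_rw [← Nat.Ico_zero_eq_range]
  rw [this]
  exact Finset.sum_congr rfl fun j _ => Finset.sum_congr rfl fun i _ => mul_comm _ _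


lemma coeff_eq_sum_eval {r : ℕ} (v : Fin r → ℝ) (hv : Function.Injective v)
    (P : ℝ[X]) (hP : P.degree < (r : ℕ)) :
    P.coeff (r - 1) = ∑ j : Fin r, P.eval (v j) * (∏ k ∈ Finset.univ.erase j, (v j - v k))⁻¹ := by
  have hcard : (Finset.univ : Finset (Fin r)).card = r := by simp
  have hP' := Lagrange.eq_interpolate (s := Finset.univ) (v := v) hv.injOn
    (by rw [hcard]; exact hP)
  conv_lhs => rw [hP']
  rw [Lagrange.interpolate_apply, Polynomial.finset_sum_coeff]
  apply Finset.sum_congr rfl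
  intro j _
  rw [Polynomial.coeff_C_mul]
  rw [Lagrange.basis]
  simp_rw [Lagrange.basisDivisor]
  rw [Finset.prod_mul_distrib, ← map_prod C (fun k => (v j - v k)⁻¹), Polynomial.coeff_C_mul,
    Finset.prod_inv_distrib]
  congr 1
  have hmon : (∏ k ∈ Finset.univ.erase j, (X - C (v k))).Monic :=
    monic_prod_of_monic _ _ fun k _ => monic_X_sub_C _
  have hnd : (∏ k ∈ Finset.univ.erase j, (X - C (v k))).natDegree = r - 1 := by
    rw [natDegree_prod_of_monic _ _ fun k _ => monic_X_sub_C _]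
    simp [Finset.card_erase_of_mem, natDegree_X_sub_C]
  have := hmon.coeff_natDegree
  rw [hnd] at this
  rw [this, mul_one]


theorem stmt_1 (r : ℕ) (hr : 1 ≤ r) (n : Fin r → ℕ) (α : Fin r → ℝ)
    (hd : Function.Injective (fun j : Fin r => (n j : ℝ) + α j))
    (q Q : Polynomial ℝ)
    (hq : q = ∏ j : Fin r, (X - C (α j)))
    (hQ : Q = ∏ j : Fin r, (X - C ((n j : ℝ) + α j))) :
    ∑ j : Fin r, ((n j : ℝ) + α j) * q.eval ((n j : ℝ) + α j)
        / Q.derivative.eval ((n j : ℝ) + α j)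
      = ∑ j : Fin r, (n j : ℝ) * α j
        + ((∑ j : Fin r, (n j : ℝ)) ^ 2 + ∑ j : Fin r, (n j : ℝ) ^ 2) / 2 := by
  classical
  set β : Fin r → ℝ := fun j => (n j : ℝ) + α j with hβ
  set N : ℝ := ∑ j, (n j : ℝ) with hNdef
  -- monicity / degrees
  have hqmon : q.Monic := by
    rw [hq]; exact monic_prod_of_monic _ _ fun k _ => monic_X_sub_C _
  have hQmon : Q.Monic := by
    rw [hQ]; exact monic_prod_of_monic _ _ fun k _ => monic_X_sub_C _
  have hqnd : q.natDegree = r := by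
    rw [hq, natDegree_prod_of_monic _ _ fun k _ => monic_X_sub_C _]
    simp only [natDegree_X_sub_C, Finset.sum_const, Finset.card_univ, Fintype.card_fin,
      smul_eq_mul, mul_one]
  have hQnd : Q.natDegree = r := by
    rw [hQ, natDegree_prod_of_monic _ _ fun k _ => monic_X_sub_C _]
    simp only [natDegree_X_sub_C, Finset.sum_const, Finset.card_univ, Fintype.card_fin,
      smul_eq_mul, mul_one]
  have hqdeg : q.degree = (r : ℕ) := by rw [degree_eq_natDegree hqmon.ne_zero, hqnd]
  have hQdeg : Q.degree = (r : ℕ) := by rw [degree_eq_natDegree hQmon.ne_zero, hQnd]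
  -- coefficients below the top
  have hucard : (Finset.univ : Finset (Fin r)).card = r := by simp
  have hqc : q.coeff (r - 1) = -∑ j, α j := by
    have := prod_X_sub_C_coeff_card_pred (Finset.univ : Finset (Fin r)) α (by omega)
    rw [hucard] at this; rw [hq, this]
  have hQc : Q.coeff (r - 1) = -∑ j, β j := by
    have := prod_X_sub_C_coeff_card_pred (Finset.univ : Finset (Fin r)) β (by omega)
    rw [hucard] at this; rw [hQ]; exact this
  have hβsum : ∑ j, β j = N + ∑ j, α j := by
    rw [hNdef, ← Finset.sum_add_distrib]
  -- D = q - Q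
  set D : ℝ[X] := q - Q with hDdef
  have hDdeg : D.degree < (r : ℕ) := by
    have := degree_sub_lt (hqdeg.trans hQdeg.symm) hqmon.ne_zero
      (by rw [hqmon.leadingCoeff, hQmon.leadingCoeff])
    rwa [hqdeg] at this
  have hDcoeff : D.coeff (r - 1) = N := by
    rw [hDdef, coeff_sub, hqc, hQc, hβsum]; ring
  -- P = X * D - C N * Q
  set P : ℝ[X] := X * D - C N * Q with hPdef
  have hPdeg : P.degree < (r : ℕ) := by
    rw [Polynomial.degree_lt_iff_coeff_zero]
    intro m hm
    obtain ⟨k, rfl⟩ : ∃ k, m = k + 1 := ⟨m - 1, by omega⟩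
    rw [hPdef, coeff_sub, coeff_C_mul, coeff_X_mul]
    rcases eq_or_lt_of_le hm with h | h
    · have hk : k = r - 1 := by omega
      have h1 : D.coeff k = N := by rw [hk, hDcoeff]
      have h2 : Q.coeff (k + 1) = 1 := by
        have := hQmon.coeff_natDegree
        rwa [hQnd, h] at this
      rw [h1, h2]; ring
    · have h1 : D.coeff k = 0 := by
        apply coeff_eq_zero_of_degree_lt
        exact lt_of_lt_of_le hDdeg (by exact_mod_cast Nat.cast_le.mpr (by omega))
      have h2 : Q.coeff (k + 1) = 0 := by
        apply coeff_eq_zero_of_natDegree_lt; omega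
      rw [h1, h2]; ring
  -- evaluations
  have hQeval : ∀ j, Q.eval (β j) = 0 := by
    intro j
    rw [hQ, eval_prod]
    exact Finset.prod_eq_zero (Finset.mem_univ j) (by simp [hβ])
  have hPeval : ∀ j, P.eval (β j) = β j * q.eval (β j) := by
    intro j
    rw [hPdef, hDdef]
    simp [hQeval j]
  have hQder : ∀ j, Q.derivative.eval (β j) = ∏ k ∈ Finset.univ.erase j, (β j - β k) := by
    intro j
    rw [hQ]
    exact eval_derivative_prod_X_sub_C _ _ (Finset.mem_univ j)
  -- LHS = P.coeff (r-1)
  have key : (∑ j : Fin r, β j * q.eval (β j) / Q.derivative.eval (β j)) = P.coeff (r - 1) := by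
    rw [coeff_eq_sum_eval β hd P hPdeg]
    apply Finset.sum_congr rfl
    intro j _
    rw [hPeval j, hQder j, div_eq_mul_inv]
  rw [key]
  -- ℕ-indexed versions
  set nn : ℕ → ℝ := fun i => if h : i < r then (n ⟨i, h⟩ : ℝ) else 0 with hnn
  set aa : ℕ → ℝ := fun i => if h : i < r then α ⟨i, h⟩ else 0 with haa
  set bb : ℕ → ℝ := fun i => nn i + aa i with hbb
  have hnn' : ∀ j : Fin r, nn j = (n j : ℝ) := fun j => by simp [hnn, j.isLt]
  have haa' : ∀ j : Fin r, aa j = α j := fun j => by simp [haa, j.isLt]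
  have hbb' : ∀ j : Fin r, bb j = β j := fun j => by simp [hbb, hnn' j, haa' j, hβ]
  have hq2 : q = ∏ i ∈ Finset.range r, (X - C (aa i)) := by
    rw [hq, ← Fin.prod_univ_eq_prod_range (fun i => X - C (aa i)) r]
    exact Finset.prod_congr rfl fun j _ => by rw [haa' j]
  have hQ2 : Q = ∏ i ∈ Finset.range r, (X - C (bb i)) := by
    rw [hQ, ← Fin.prod_univ_eq_prod_range (fun i => X - C (bb i)) r]
    exact Finset.prod_congr rfl fun j _ => by rw [hbb' j]
  -- coefficient of X*D via telescoping
  have hXD : (X * D).coeff (r - 1)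
      = ∑ j ∈ Finset.range r,
          nn j * (-(∑ i ∈ Finset.range j, bb i) - ∑ i ∈ Finset.Ico (j+1) r, aa i) := by
    have htele := tele (fun i => X - C (aa i)) (fun i => X - C (bb i)) r
    rw [hDdef, hq2, hQ2, htele, Finset.mul_sum, Polynomial.finset_sum_coeff]
    apply Finset.sum_congr rfl
    intro j hj
    rw [Finset.mem_range] at hj
    have hfac : (X - C (aa j)) - (X - C (bb j)) = C (nn j) := by
      rw [sub_sub_sub_cancel_left, ← C_sub, hbb]
      norm_num
    rw [hfac]
    set M : ℝ[X] := X * (∏ i ∈ Finset.range j, (X - C (bb i)))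
        * (∏ i ∈ Finset.Ico (j+1) r, (X - C (aa i))) with hM
    have hrw : X * ((∏ i ∈ Finset.range j, (X - C (bb i))) * C (nn j)
        * (∏ i ∈ Finset.Ico (j+1) r, (X - C (aa i)))) = C (nn j) * M := by
      rw [hM]; ring
    rw [hrw, coeff_C_mul]
    congr 1
    have hm1 : (∏ i ∈ Finset.range j, (X - C (bb i))).Monic :=
      monic_prod_of_monic _ _ fun k _ => monic_X_sub_C _
    have hm2 : (∏ i ∈ Finset.Ico (j+1) r, (X - C (aa i))).Monic :=
      monic_prod_of_monic _ _ fun k _ => monic_X_sub_C _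
    have hMmon : M.Monic := (monic_X.mul hm1).mul hm2
    have hnd1 : (∏ i ∈ Finset.range j, (X - C (bb i))).natDegree = j := by
      rw [natDegree_prod_of_monic _ _ fun k _ => monic_X_sub_C _]
      simp [natDegree_X_sub_C]
    have hnd2 : (∏ i ∈ Finset.Ico (j+1) r, (X - C (aa i))).natDegree = r - (j+1) := by
      rw [natDegree_prod_of_monic _ _ fun k _ => monic_X_sub_C _]
      simp [natDegree_X_sub_C]
    have hMnd : M.natDegree = r := by
      rw [hM, (monic_X.mul hm1).natDegree_mul hm2, monic_X.natDegree_mul hm1,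
        natDegree_X, hnd1, hnd2]
      omega
    have hMc : M.coeff (r - 1) = M.nextCoeff := by
      rw [nextCoeff_of_natDegree_pos (by omega), hMnd]
    have hXnc : (X : ℝ[X]).nextCoeff = 0 := by
      rw [nextCoeff_of_natDegree_pos (by simp [natDegree_X])]
      simp
    rw [hMc, hM, (monic_X.mul hm1).nextCoeff_mul hm2, monic_X.nextCoeff_mul hm1,
      hXnc, prod_X_sub_C_nextCoeff, prod_X_sub_C_nextCoeff]
    ring
  -- assemble coefficient of P
  have hPc : P.coeff (r - 1)
      = (∑ j ∈ Finset.range r,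
          nn j * (-(∑ i ∈ Finset.range j, bb i) - ∑ i ∈ Finset.Ico (j+1) r, aa i))
        + N * ∑ j, β j := by
    rw [hPdef, coeff_sub, coeff_C_mul, hXD, hQc]
    ring
  rw [hPc]
  -- convert Fin sums to range sums
  have hsum : ∀ f : Fin r → ℝ, ∀ g : ℕ → ℝ, (∀ j : Fin r, g j = f j) →
      ∑ j : Fin r, f j = ∑ i ∈ Finset.range r, g i := by
    intro f g hfg
    rw [← Fin.sum_univ_eq_sum_range g r]
    exact Finset.sum_congr rfl fun j _ => (hfg j).symm
  have hsN : N = ∑ i ∈ Finset.range r, nn i := hsum _ _ hnn'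
  have hsA : ∑ j, α j = ∑ i ∈ Finset.range r, aa i := hsum _ _ haa'
  have hsB : ∑ j, β j = ∑ i ∈ Finset.range r, bb i := hsum _ _ hbb'
  have hsNA : ∑ j, (n j : ℝ) * α j = ∑ i ∈ Finset.range r, nn i * aa i :=
    hsum _ _ fun j => by rw [hnn' j, haa' j]
  have hsN2 : ∑ j, (n j : ℝ) ^ 2 = ∑ i ∈ Finset.range r, nn i ^ 2 :=
    hsum _ _ fun j => by rw [hnn' j]
  rw [hsB, hsNA, hsN2]
  -- the purely real identity
  have hsplit : ∀ f : ℕ → ℝ, ∀ j, j < r →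
      ∑ i ∈ Finset.range j, f i + ∑ i ∈ Finset.Ico (j+1) r, f i
        = ∑ i ∈ Finset.range r, f i - f j := by
    intro f j hj
    have h1 : ∑ i ∈ Finset.range j, f i + ∑ i ∈ Finset.Ico j r, f i
        = ∑ i ∈ Finset.range r, f i := by
      rw [Finset.range_eq_Ico, Finset.sum_Ico_consecutive f (Nat.zero_le j) hj.le,
        ← Finset.range_eq_Ico]
    have h2 : ∑ i ∈ Finset.Ico j r, f i = f j + ∑ i ∈ Finset.Ico (j+1) r, f i :=
      Finset.sum_eq_sum_Ico_succ_bot hj f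
    linarith
  have hterm : ∀ j ∈ Finset.range r,
      nn j * (-(∑ i ∈ Finset.range j, bb i) - ∑ i ∈ Finset.Ico (j+1) r, aa i)
        = nn j * aa j - nn j * (∑ i ∈ Finset.range r, aa i)
          - nn j * ∑ i ∈ Finset.range j, nn i := by
    intro j hj
    rw [Finset.mem_range] at hj
    have ha := hsplit aa j hj
    have hb : ∑ i ∈ Finset.range j, bb i
        = ∑ i ∈ Finset.range j, nn i + ∑ i ∈ Finset.range j, aa i := by
      rw [hbb, ← Finset.sum_add_distrib]
    rw [hb]
    linear_combination (-(nn j)) * ha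
  rw [Finset.sum_congr rfl hterm]
  have hNsq : N * N = 2 * (∑ j ∈ Finset.range r, nn j * ∑ i ∈ Finset.range j, nn i)
      + ∑ i ∈ Finset.range r, nn i ^ 2 := by
    have h1 : N * N = ∑ j ∈ Finset.range r, nn j * N := by
      rw [← Finset.sum_mul, ← hsN]
    have h2 : ∀ j ∈ Finset.range r, nn j * N
        = nn j * ∑ i ∈ Finset.range j, nn i + nn j ^ 2
          + nn j * ∑ i ∈ Finset.Ico (j+1) r, nn i := by
      intro j hj
      rw [Finset.mem_range] at hj
      have := hsplit nn j hj
      rw [hsN]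
      linear_combination (-(nn j)) * this
    rw [h1, Finset.sum_congr rfl h2, Finset.sum_add_distrib, Finset.sum_add_distrib,
      ← swap_sum r nn]
    ring
  have hBsum : ∑ i ∈ Finset.range r, bb i
      = N + ∑ i ∈ Finset.range r, aa i := by
    rw [hsN, hbb, ← Finset.sum_add_distrib]
  rw [Finset.sum_sub_distrib, Finset.sum_sub_distrib, ← Finset.sum_mul, ← hsN, hBsum]
  linear_combination (1/2 : ℝ) * hNsq
end

section
/- For multiple Laguerre polynomials of the second kind, with recurrence coefficients b_{n,k} = (|n| + α + 1)/c_k + ∑_{j=1}^r n_j/c_j and a_{n,j} = (|n| + α)·n_j/c_j², the compatibility relations hold for all i ≠ j: (1) b_{n+e_i,j} − b_{n,j} = b_{n+e_j,i} − b_{n,i}; (2) ∑_k a_{n+e_j,k} − ∑_k a_{n+e_i,k} = b_{n+e_j,i}·b_{n,j} − b_{n,i}·b_{n+e_i,j}; (3) a_{n,i}·(b_{n,j} − b_{n,i}) = a_{n+e_j,i}·(b_{n−e_i,j} − b_{n−e_i,i}) whenever n_i ≥ 1. -/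
open Finset

/-- `n + e i`: add 1 to the `i`-th component of the multi-index `n`. -/
def add1 {r : ℕ} (n : Fin r → ℕ) (i : Fin r) : Fin r → ℕ :=
  fun s => n s + if s = i then 1 else 0

/-- `n - e i`: subtract 1 from the `i`-th component of the multi-index `n`. -/
def sub1 {r : ℕ} (n : Fin r → ℕ) (i : Fin r) : Fin r → ℕ :=
  fun s => n s - if s = i then 1 else 0

lemma key_mul {r : ℕ} (m : Fin r → ℕ) (i : Fin r) (f : Fin r → ℝ) :
    (∑ l, ((add1 m i l : ℕ) : ℝ) * f l) = (∑ l, (m l : ℝ) * f l) + f i := by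
  simp only [add1]
  push_cast
  simp [add_mul, Finset.sum_add_distrib, ite_mul, Finset.sum_ite_eq']

lemma key_sum {r : ℕ} (m : Fin r → ℕ) (i : Fin r) :
    (∑ l, ((add1 m i l : ℕ) : ℝ)) = (∑ l, (m l : ℝ)) + 1 := by
  simpa using key_mul m i (fun _ => 1)

lemma key_div {r : ℕ} (m : Fin r → ℕ) (i : Fin r) (g : Fin r → ℝ) :
    (∑ l, ((add1 m i l : ℕ) : ℝ) / g l) = (∑ l, (m l : ℝ) / g l) + 1 / g i := by
  simp only [div_eq_mul_inv, one_mul]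
  simpa using key_mul m i (fun l => (g l)⁻¹)

theorem stmt_4 (r : ℕ) (ca : Fin r → ℝ) (hpos : ∀ j, 0 < ca j)
    (hca : Function.Injective ca)
    (α : ℝ) (hα : -1 < α)
    (b a : (Fin r → ℕ) → Fin r → ℝ)
    (hb : ∀ (n : Fin r → ℕ) k,
      b n k = ((∑ l, (n l : ℝ)) + α + 1) / ca k + ∑ l, (n l : ℝ) / ca l)
    (ha : ∀ (n : Fin r → ℕ) j,
      a n j = ((∑ l, (n l : ℝ)) + α) * (n j : ℝ) / (ca j) ^ 2)
    (n : Fin r → ℕ) (i j : Fin r) (hij : i ≠ j) :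
    (b (add1 n i) j - b n j = b (add1 n j) i - b n i) ∧
    ((∑ k, a (add1 n j) k) - (∑ k, a (add1 n i) k)
      = b (add1 n j) i * b n j - b n i * b (add1 n i) j) ∧
    (1 ≤ n i → a n i * (b n j - b n i)
      = a (add1 n j) i * (b (sub1 n i) j - b (sub1 n i) i)) := by
  classical
  have hsumA : ∀ m : Fin r → ℕ, ∀ i : Fin r,
      (∑ k, a (add1 m i) k)
        = ((∑ l, (m l : ℝ)) + 1 + α) * ((∑ l, (m l : ℝ) / ca l ^ 2) + 1 / ca i ^ 2) := by
    intro m i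
    have : ∀ k, a (add1 m i) k
        = ((∑ l, (m l : ℝ)) + 1 + α) * (((add1 m i k : ℕ) : ℝ) / ca k ^ 2) := by
      intro k
      rw [ha, key_sum, mul_div_assoc]
    rw [Finset.sum_congr rfl (fun k _ => this k), ← Finset.mul_sum, key_div]
  refine ⟨?_, ?_, ?_⟩
  · rw [hb, hb, hb, hb, key_sum, key_sum, key_div, key_div]
    ring
  · rw [hsumA, hsumA, hb, hb, hb, hb, key_sum, key_sum, key_div, key_div]
    ring
  · intro hni
    have hrest : add1 (sub1 n i) i = n := by
      funext s
      simp only [add1, sub1]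
      by_cases hs : s = i
      · subst hs; simp; omega
      · simp [hs]
    have hS : (∑ l, (n l : ℝ)) = (∑ l, (sub1 n i l : ℝ)) + 1 := by
      rw [← key_sum (sub1 n i) i, hrest]
    have hT : (∑ l, (n l : ℝ) / ca l) = (∑ l, (sub1 n i l : ℝ) / ca l) + 1 / ca i := by
      rw [← key_div (sub1 n i) i, hrest]
    have hni' : ((add1 n j i : ℕ) : ℝ) = (n i : ℝ) := by
      simp [add1, hij.symm.symm, Ne.symm hij]
    rw [ha, ha, hb, hb, hb, hb, key_sum, hni', hS, hT]
    ring
end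

section
/- (Abstract Christoffel-Darboux for nearest-neighbor recurrences.) Let (P_n)_{n∈ℕ^r} and (Q_n)_{n∈ℕ^r} be families of functions of a real variable with Q_0 = 0, and scalars a_{n,j}, b_{n,j} satisfying for every n ∈ ℕ^r and k: x·P_n(x) = P_{n+e_k}(x) + b_{n,k} P_n(x) + ∑_j a_{n,j} P_{n−e_j}(x) and y·Q_n(y) = Q_{n−e_k}(y) + b_{n−e_k,k} Q_n(y) + ∑_j a_{n,j} Q_{n+e_j}(y), with the conventions P_{n−e_j} = 0 and a_{n,j} = 0 when n_j = 0. Assume in addition the compatibility relations b_{n+e_i,j} − b_{n,j} = b_{n+e_j,i} − b_{n,i} and a_{n,i}(b_{n,j} − b_{n,i}) = a_{n+e_j,i}(b_{n−e_i,j} − b_{n−e_i,i}) for all i ≠ j. Then for every path n_0 = 0, n_1, …, n_N = n with each n_{i+1} − n_i a standard unit vector, (x − y)·∑_{i=0}^{N−1} P_{n_i}(x) Q_{n_{i+1}}(y) = P_n(x) Q_n(y) − ∑_{j=1}^r a_{n,j} P_{n−e_j}(x) Q_{n+e_j}(y). -/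
open Finset

namespace CDaux

variable {r : ℕ}

lemma sub1_add1 (n : Fin r → ℕ) (k : Fin r) : sub1 (add1 n k) k = n := by
  funext s; simp only [add1, sub1]; split_ifs <;> omega

lemma add1_apply_self (n : Fin r → ℕ) (k : Fin r) : add1 n k k = n k + 1 := by
  simp [add1]

lemma add1_apply_ne (n : Fin r → ℕ) (k j : Fin r) (h : j ≠ k) : add1 n k j = n j := by
  simp [add1, h]

lemma sub1_add1_comm (m : Fin r → ℕ) (k j : Fin r) (h : k ≠ j) :
    sub1 (add1 m j) k = add1 (sub1 m k) j := by
  funext s; simp only [add1, sub1]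
  by_cases hk : s = k <;> by_cases hj : s = j <;> simp_all <;> omega

lemma add1_sub1_self (n : Fin r → ℕ) (j : Fin r) (h : n j ≠ 0) :
    add1 (sub1 n j) j = n := by
  funext s; simp only [add1, sub1]; split_ifs with hs <;> subst_vars <;> omega

lemma tele (N : ℕ) (f : Fin (N + 1) → ℝ) :
    ∑ i : Fin N, (f i.succ - f i.castSucc) = f (Fin.last N) - f 0 := by
  induction N with
  | zero => simp
  | succ N ih =>
    rw [Fin.sum_univ_castSucc]
    have h := ih (fun i => f i.castSucc)
    simp only [Fin.succ_castSucc] at h ⊢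
    rw [show ∑ i : Fin N, (f (i.succ).castSucc - f i.castSucc.castSucc)
        = f (Fin.last N).castSucc - f (0 : Fin (N+1)).castSucc from h]
    rw [Fin.succ_last, Fin.castSucc_zero]
    ring

end CDaux

theorem stmt_8 (r : ℕ)
    (P Q : (Fin r → ℕ) → ℝ → ℝ)
    (a b : (Fin r → ℕ) → Fin r → ℝ)
    (hQ0 : Q (fun _ => 0) = 0)
    (ha0 : ∀ (n : Fin r → ℕ) j, n j = 0 → a n j = 0)
    (hPrec : ∀ (n : Fin r → ℕ) (k : Fin r) (x : ℝ),
      x * P n x = P (add1 n k) x + b n k * P n x +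
        ∑ j, a n j * (if n j = 0 then 0 else P (sub1 n j) x))
    (hQrec : ∀ (n : Fin r → ℕ) (k : Fin r) (y : ℝ),
      y * Q n y = (if n k = 0 then 0 else Q (sub1 n k) y) +
        b (sub1 n k) k * Q n y + ∑ j, a n j * Q (add1 n j) y)
    (hcomp1 : ∀ (n : Fin r → ℕ) (i j : Fin r), i ≠ j →
      b (add1 n i) j - b n j = b (add1 n j) i - b n i)
    (hcomp3 : ∀ (n : Fin r → ℕ) (i j : Fin r), i ≠ j →
      a n i * (b n j - b n i)
        = a (add1 n j) i * (b (sub1 n i) j - b (sub1 n i) i))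
    (n : Fin r → ℕ) (N : ℕ) (p : Fin (N + 1) → Fin r → ℕ)
    (hp0 : p 0 = fun _ => 0) (hpN : p (Fin.last N) = n)
    (hstep : ∀ i : Fin N, ∃ k : Fin r, p i.succ = add1 (p i.castSucc) k)
    (x y : ℝ) :
    (x - y) * ∑ i : Fin N, P (p i.castSucc) x * Q (p i.succ) y
      = P n x * Q n y
        - ∑ j, a n j * ((if n j = 0 then 0 else P (sub1 n j) x) * Q (add1 n j) y) := by
  open CDaux in
  have Pdiff : ∀ (m : Fin r → ℕ) (k j : Fin r),
      P (add1 m k) x - P (add1 m j) x = (b m j - b m k) * P m x := by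
    intro m k j
    have hk := hPrec m k x
    have hj := hPrec m j x
    linarith
  have Qdiff : ∀ (m : Fin r → ℕ) (k j : Fin r), m k ≠ 0 → m j ≠ 0 →
      Q (sub1 m k) y - Q (sub1 m j) y = (b (sub1 m j) j - b (sub1 m k) k) * Q m y := by
    intro m k j hk hj
    have h1 := hQrec m k y
    have h2 := hQrec m j y
    rw [if_neg hk] at h1
    rw [if_neg hj] at h2
    linarith
  set S : (Fin r → ℕ) → ℝ := fun m =>
    P m x * Q m y -
      ∑ j, a m j * ((if m j = 0 then 0 else P (sub1 m j) x) * Q (add1 m j) y) with hS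
  have step : ∀ (m : Fin r → ℕ) (k : Fin r),
      (x - y) * (P m x * Q (add1 m k) y) = S (add1 m k) - S m := by
    intro m k
    have hAk : add1 m k k = m k + 1 := add1_apply_self m k
    have h1 := hPrec m k x
    have h2 := hQrec (add1 m k) k y
    rw [sub1_add1, if_neg (show add1 m k k ≠ 0 by rw [hAk]; omega)] at h2
    have hsum : ∀ j : Fin r,
        a m j * (if m j = 0 then 0 else P (sub1 m j) x) * Q (add1 m k) y
          - P m x * (a (add1 m k) j * Q (add1 (add1 m k) j) y)
        = a m j * ((if m j = 0 then 0 else P (sub1 m j) x) * Q (add1 m j) y)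
          - a (add1 m k) j *
              ((if add1 m k j = 0 then 0 else P (sub1 (add1 m k) j) x)
                * Q (add1 (add1 m k) j) y) := by
      intro j
      by_cases hjk : j = k
      · subst hjk
        rw [if_neg (show add1 m j j ≠ 0 by rw [add1_apply_self]; omega), sub1_add1]
        ring
      · by_cases hm0 : m j = 0
        · have hA0 : add1 m k j = 0 := by rw [add1_apply_ne m k j hjk]; exact hm0
          rw [ha0 m j hm0, ha0 (add1 m k) j hA0, if_pos hm0, if_pos hA0]
          ring
        · have hAj : add1 m k j = m j := add1_apply_ne m k j hjk
          rw [if_neg hm0, if_neg (by rw [hAj]; exact hm0)]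
          have hsub : sub1 (add1 m k) j = add1 (sub1 m j) k := sub1_add1_comm m j k hjk
          have hP : P m x - P (sub1 (add1 m k) j) x
              = (b (sub1 m j) k - b (sub1 m j) j) * P (sub1 m j) x := by
            have := Pdiff (sub1 m j) j k
            rw [add1_sub1_self m j hm0] at this
            rw [hsub]
            linarith
          have hMk : (add1 (add1 m k) j) k ≠ 0 := by
            rw [add1_apply_ne (add1 m k) j k (Ne.symm hjk), hAk]; omega
          have hMj : (add1 (add1 m k) j) j ≠ 0 := by rw [add1_apply_self]; omega
          have hsub2 : sub1 (add1 (add1 m k) j) k = add1 m j := by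
            rw [sub1_add1_comm (add1 m k) k j (Ne.symm hjk), sub1_add1]
          have hQ : Q (add1 m k) y - Q (add1 m j) y
              = (b (add1 m j) k - b (add1 m k) j) * Q (add1 (add1 m k) j) y := by
            have := Qdiff (add1 (add1 m k) j) j k hMj hMk
            rw [sub1_add1 (add1 m k) j, hsub2] at this
            linarith
          have hsc : a m j * (b (add1 m j) k - b (add1 m k) j)
              = a (add1 m k) j * (b (sub1 m j) k - b (sub1 m j) j) := by
            have h3 := hcomp3 m j k hjk
            have hc1 := hcomp1 m j k hjk
            linear_combination h3 + a m j * hc1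
          linear_combination
            a m j * P (sub1 m j) x * hQ
            - a (add1 m k) j * Q (add1 (add1 m k) j) y * hP
            + P (sub1 m j) x * Q (add1 (add1 m k) j) y * hsc
    have e1 : (∑ j, a m j * (if m j = 0 then 0 else P (sub1 m j) x)) * Q (add1 m k) y
        = ∑ j, a m j * (if m j = 0 then 0 else P (sub1 m j) x) * Q (add1 m k) y :=
      Finset.sum_mul _ _ _
    have e2 : P m x * (∑ j, a (add1 m k) j * Q (add1 (add1 m k) j) y)
        = ∑ j, P m x * (a (add1 m k) j * Q (add1 (add1 m k) j) y) :=
      Finset.mul_sum _ _ _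
    have key : (∑ j, a m j * (if m j = 0 then 0 else P (sub1 m j) x) * Q (add1 m k) y)
          - (∑ j, P m x * (a (add1 m k) j * Q (add1 (add1 m k) j) y))
        = (∑ j, a m j * ((if m j = 0 then 0 else P (sub1 m j) x) * Q (add1 m j) y))
          - (∑ j, a (add1 m k) j *
              ((if add1 m k j = 0 then 0 else P (sub1 (add1 m k) j) x)
                * Q (add1 (add1 m k) j) y)) := by
      rw [← Finset.sum_sub_distrib, ← Finset.sum_sub_distrib]
      exact Finset.sum_congr rfl fun j _ => hsum j
    simp only [hS]
    linear_combination Q (add1 m k) y * h1 - P m x * h2 + e1 - e2 + key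
  have hmain : ∀ i : Fin N,
      (x - y) * (P (p i.castSucc) x * Q (p i.succ) y)
        = S (p i.succ) - S (p i.castSucc) := by
    intro i
    obtain ⟨k, hk⟩ := hstep i
    rw [hk]
    exact step (p i.castSucc) k
  have hS0 : S (p 0) = 0 := by
    rw [hp0, hS]
    simp only
    rw [show Q (fun _ => 0) y = 0 from by rw [hQ0]; rfl]
    have : ∀ j : Fin r, a (fun _ => 0 : Fin r → ℕ) j = 0 := fun j => ha0 _ j rfl
    simp [this]
  calc (x - y) * ∑ i : Fin N, P (p i.castSucc) x * Q (p i.succ) y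
      = ∑ i : Fin N, (x - y) * (P (p i.castSucc) x * Q (p i.succ) y) := by
        rw [Finset.mul_sum]
    _ = ∑ i : Fin N, (S (p i.succ) - S (p i.castSucc)) :=
        Finset.sum_congr rfl fun i _ => hmain i
    _ = S (p (Fin.last N)) - S (p 0) := CDaux.tele N (fun i => S (p i))
    _ = S n := by rw [hpN, hS0]; ring
    _ = _ := by rw [hS]
end

section
/- For r = 2, suppose (P_{n,m})_{(n,m)∈ℕ²} is a family of monic polynomials satisfying the two recurrences P_{n+1,m}(x) = (x − c_{n,m})P_{n,m}(x) − a_{n,m}P_{n−1,m}(x) − b_{n,m}P_{n,m−1}(x) and P_{n,m+1}(x) = (x − d_{n,m})P_{n,m}(x) − a_{n,m}P_{n−1,m}(x) − b_{n,m}P_{n,m−1}(x), with a_{0,m} = b_{n,0} = 0, and that for every (n,m) the polynomials P_{n,m}, P_{n−1,m}, P_{n,m−1} are linearly independent (ignoring those with negative indices). Then computing P_{n+1,m+1} via the two orders of the recurrences and equating coefficients yields: d_{n+1,m} − d_{n,m} = c_{n,m+1} − c_{n,m}. -/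
open Polynomial

theorem stmt_10
    (P : ℕ → ℕ → Polynomial ℝ)
    (a b c d : ℕ → ℕ → ℝ)
    (ha0 : ∀ m, a 0 m = 0) (hb0 : ∀ n, b n 0 = 0)
    (hmonic : ∀ n m, (P n m).Monic)
    (hdeg : ∀ n m, (P n m).natDegree = n + m)
    (hrec1 : ∀ n m, P (n + 1) m =
      (X - C (c n m)) * P n m - C (a n m) * (if n = 0 then 0 else P (n - 1) m)
        - C (b n m) * (if m = 0 then 0 else P n (m - 1)))
    (hrec2 : ∀ n m, P n (m + 1) =
      (X - C (d n m)) * P n m - C (a n m) * (if n = 0 then 0 else P (n - 1) m)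
        - C (b n m) * (if m = 0 then 0 else P n (m - 1)))
    (hli : ∀ n m (u v w : ℝ),
      u • P n m + v • (if n = 0 then 0 else P (n - 1) m)
        + w • (if m = 0 then 0 else P n (m - 1)) = 0 →
      u = 0 ∧ (n ≠ 0 → v = 0) ∧ (m ≠ 0 → w = 0)) :
    ∀ n m, d (n + 1) m - d n m = c n (m + 1) - c n m := by
  -- s n m is the coefficient of P n m in degree n+m-1 (0 if n=m=0)
  set s : ℕ → ℕ → ℝ := fun n m => (X * P n m).coeff (n + m) with hs
  have hlead : ∀ n m, (P n m).coeff (n + m) = 1 := by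
    intro n m
    have := (hmonic n m).leadingCoeff
    rwa [leadingCoeff, hdeg] at this
  have hsmall : ∀ (n m : ℕ) (q : ℝ) (i j : ℕ), i + j < n + m →
      (C q * P i j).coeff (n + m) = 0 := by
    intro n m q i j hij
    apply coeff_eq_zero_of_natDegree_lt
    calc (C q * P i j).natDegree ≤ (C q).natDegree + (P i j).natDegree :=
          natDegree_mul_le
      _ = i + j := by simp [hdeg]
      _ < n + m := hij
  have hzsmall : ∀ (n m : ℕ) (q : ℝ),
      (C q * (0 : Polynomial ℝ)).coeff (n + m) = 0 := by
    intro n m q; simp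
  have key1 : ∀ n m, s (n + 1) m = s n m - c n m := by
    intro n m
    have : s (n + 1) m = (P (n + 1) m).coeff (n + m) := by
      simp only [hs]
      rw [show n + 1 + m = (n + m) + 1 by ring, coeff_X_mul]
    rw [this, hrec1 n m]
    have h1 : ((X - C (c n m)) * P n m).coeff (n + m)
        = s n m - c n m * (P n m).coeff (n + m) := by
      rw [sub_mul, coeff_sub, C_mul' (c n m) (P n m)]
      simp [hs, coeff_smul, smul_eq_mul]
    have h2 : (C (a n m) * (if n = 0 then 0 else P (n - 1) m)).coeff (n + m) = 0 := by
      rcases Nat.eq_zero_or_pos n with h | h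
      · simp [h]
      · rw [if_neg (by omega : ¬ _ = 0)]
        exact hsmall n m _ _ _ (by omega)
    have h3 : (C (b n m) * (if m = 0 then 0 else P n (m - 1))).coeff (n + m) = 0 := by
      rcases Nat.eq_zero_or_pos m with h | h
      · simp [h]
      · rw [if_neg (by omega : ¬ _ = 0)]
        exact hsmall n m _ _ _ (by omega)
    rw [coeff_sub, coeff_sub, h1, h2, h3, hlead]
    ring
  have key2 : ∀ n m, s n (m + 1) = s n m - d n m := by
    intro n m
    have : s n (m + 1) = (P n (m + 1)).coeff (n + m) := by
      simp only [hs]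
      rw [show n + (m + 1) = (n + m) + 1 by ring, coeff_X_mul]
    rw [this, hrec2 n m]
    have h1 : ((X - C (d n m)) * P n m).coeff (n + m)
        = s n m - d n m * (P n m).coeff (n + m) := by
      rw [sub_mul, coeff_sub, C_mul' (d n m) (P n m)]
      simp [hs, coeff_smul, smul_eq_mul]
    have h2 : (C (a n m) * (if n = 0 then 0 else P (n - 1) m)).coeff (n + m) = 0 := by
      rcases Nat.eq_zero_or_pos n with h | h
      · simp [h]
      · rw [if_neg (by omega : ¬ _ = 0)]
        exact hsmall n m _ _ _ (by omega)
    have h3 : (C (b n m) * (if m = 0 then 0 else P n (m - 1))).coeff (n + m) = 0 := by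
      rcases Nat.eq_zero_or_pos m with h | h
      · simp [h]
      · rw [if_neg (by omega : ¬ _ = 0)]
        exact hsmall n m _ _ _ (by omega)
    rw [coeff_sub, coeff_sub, h1, h2, h3, hlead]
    ring
  intro n m
  have e1 : s (n + 1) (m + 1) = s n m - c n m - d (n + 1) m := by
    rw [key2 (n + 1) m, key1 n m]
  have e2 : s (n + 1) (m + 1) = s n m - d n m - c n (m + 1) := by
    rw [key1 n (m + 1), key2 n m]
  have := e1.symm.trans e2
  linarith
end

section
/- For r = 2 under the same hypotheses (two nearest-neighbor recurrences with coefficients a, b, c, d and linear independence of P_{n,m}, P_{n−1,m}, P_{n,m−1}), one also has: b_{n+1,m} − b_{n,m+1} + a_{n+1,m} − a_{n,m+1} = d_{n+1,m}·c_{n,m} − d_{n,m}·c_{n,m+1}. -/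
open Polynomial

theorem stmt_11
    (P : ℕ → ℕ → Polynomial ℝ)
    (a b c d : ℕ → ℕ → ℝ)
    (ha0 : ∀ m, a 0 m = 0) (hb0 : ∀ n, b n 0 = 0)
    (hmonic : ∀ n m, (P n m).Monic)
    (hdeg : ∀ n m, (P n m).natDegree = n + m)
    (hrec1 : ∀ n m, P (n + 1) m =
      (X - C (c n m)) * P n m - C (a n m) * (if n = 0 then 0 else P (n - 1) m)
        - C (b n m) * (if m = 0 then 0 else P n (m - 1)))
    (hrec2 : ∀ n m, P n (m + 1) =
      (X - C (d n m)) * P n m - C (a n m) * (if n = 0 then 0 else P (n - 1) m)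
        - C (b n m) * (if m = 0 then 0 else P n (m - 1)))
    (hli : ∀ n m (u v w : ℝ),
      u • P n m + v • (if n = 0 then 0 else P (n - 1) m)
        + w • (if m = 0 then 0 else P n (m - 1)) = 0 →
      u = 0 ∧ (n ≠ 0 → v = 0) ∧ (m ≠ 0 → w = 0)) :
    ∀ n m, b (n + 1) m - b n (m + 1) + a (n + 1) m - a n (m + 1)
      = d (n + 1) m * c n m - d n m * c n (m + 1) := by
  have hlead : ∀ n m, (P n m).coeff (n + m) = 1 := by
    intro n m
    have := (hmonic n m).coeff_natDegree
    rwa [hdeg] at this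
  have hzero : ∀ n m j, n + m < j → (P n m).coeff j = 0 := by
    intro n m j hj
    exact coeff_eq_zero_of_natDegree_lt (by rw [hdeg]; exact hj)
  have hA : ∀ n m j, n + m ≤ j → ((if n = 0 then (0:ℝ[X]) else P (n-1) m)).coeff j = 0 := by
    intro n m j hj
    rcases n with _ | n
    · simp
    · simp only [Nat.succ_ne_zero, if_false, Nat.succ_sub_one]
      exact hzero n m j (by omega)
  have hB : ∀ n m j, n + m ≤ j → ((if m = 0 then (0:ℝ[X]) else P n (m-1))).coeff j = 0 := by
    intro n m j hj
    rcases m with _ | m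
    · simp
    · simp only [Nat.succ_ne_zero, if_false, Nat.succ_sub_one]
      exact hzero n m j (by omega)
  intro n m
  -- abbreviations
  have hq12 : X * P (n+1) m - X * P n (m+1) = C (d n m - c n m) * (X * P n m) := by
    rw [← mul_sub, hrec1 n m, hrec2 n m, C_sub]; ring
  have hdiff : (X * P (n+1) m).coeff (n+m) - (X * P n (m+1)).coeff (n+m)
      = (d n m - c n m) * (X * P n m).coeff (n+m) := by
    rw [← coeff_sub, hq12, coeff_C_mul]
  have hq1k : (P (n+1) m).coeff (n+m) = (X * P n m).coeff (n+m) - c n m := by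
    have h := congrArg (fun q => q.coeff (n+m)) (hrec1 n m)
    simp only [coeff_sub, sub_mul, coeff_C_mul] at h
    rw [hlead n m, hA n m (n+m) le_rfl, hB n m (n+m) le_rfl] at h
    rw [h]; ring
  have hq2k : (P n (m+1)).coeff (n+m) = (X * P n m).coeff (n+m) - d n m := by
    have h := congrArg (fun q => q.coeff (n+m)) (hrec2 n m)
    simp only [coeff_sub, sub_mul, coeff_C_mul] at h
    rw [hlead n m, hA n m (n+m) le_rfl, hB n m (n+m) le_rfl] at h
    rw [h]; ring
  have hB1 : b (n+1) m * ((if m = 0 then (0:ℝ[X]) else P (n+1) (m-1))).coeff (n+m) = b (n+1) m := by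
    rcases m with _ | m
    · simp [hb0]
    · simp only [Nat.succ_ne_zero, if_false, Nat.succ_sub_one]
      rw [show n + (m+1) = (n+1) + m by omega, hlead (n+1) m, mul_one]
  have hA2 : a n (m+1) * ((if n = 0 then (0:ℝ[X]) else P (n-1) (m+1))).coeff (n+m) = a n (m+1) := by
    rcases n with _ | n
    · simp [ha0]
    · simp only [Nat.succ_ne_zero, if_false, Nat.succ_sub_one]
      rw [show (n+1) + m = n + (m+1) by omega, hlead n (m+1), mul_one]
  have hmain : (X - C (d (n+1) m)) * P (n+1) m - C (a (n+1) m) * P n m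
        - C (b (n+1) m) * (if m = 0 then 0 else P (n+1) (m-1))
      = (X - C (c n (m+1))) * P n (m+1)
        - C (a n (m+1)) * (if n = 0 then 0 else P (n-1) (m+1))
        - C (b n (m+1)) * P n m := by
    have h1 := hrec2 (n+1) m
    have h2 := hrec1 n (m+1)
    simp only [Nat.succ_ne_zero, if_false, Nat.add_sub_cancel] at h1 h2
    exact h1.symm.trans h2
  -- coefficient at n+m+1
  have eA := congrArg (fun q => q.coeff (n+m+1)) hmain
  simp only [coeff_sub, sub_mul, coeff_C_mul, coeff_X_mul] at eA
  rw [hq1k, hq2k, show n+m+1 = (n+1)+m by omega, hlead (n+1) m,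
    hzero n m ((n+1)+m) (by omega),
    hB (n+1) m ((n+1)+m) le_rfl,
    show (n+1)+m = n+(m+1) by omega, hlead n (m+1),
    hA n (m+1) (n+(m+1)) le_rfl] at eA
  -- coefficient at n+m
  have eB := congrArg (fun q => q.coeff (n+m)) hmain
  simp only [coeff_sub, sub_mul, coeff_C_mul] at eB
  rw [hq1k, hq2k, hlead n m, hB1, hA2] at eB
  -- now pure algebra
  set E := (X * P n m).coeff (n+m) with hE
  set Y1 := (X * P (n+1) m).coeff (n+m) with hY1
  set Y2 := (X * P n (m+1)).coeff (n+m) with hY2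
  have hc2 : c n (m+1) = d (n+1) m + c n m - d n m := by linarith
  linear_combination hdiff - eB + E * hc2
end

section
/- Let r ≥ 1, n : Fin r → ℕ, α : Fin r → ℝ, β ∈ ℝ, with the n_j + α_j pairwise distinct, and suppose |n| + n_j + α_j + β ≠ 0 for all j and q, Q as before. If δ = −(|n| + β)·q(−|n|−β)/Q(−|n|−β) + β, then δ = −∑_{j=1}^r [(n_j + α_j)·q(n_j+α_j)/Q'(n_j+α_j)] / (|n| + n_j + α_j + β). -/
open Polynomial Finset

/-!
With `x j = n j + α j`, `Q` is the nodal polynomial of the nodes `x j`. Since `q - Q` has degree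
`< r`, Lagrange interpolation of `q - Q` at the nodes gives the partial fraction expansion of
`q / Q` at `z = -|n| - β`, and comparing the coefficients of `X ^ (r - 1)` gives
`∑ j, q (x j) / Q' (x j) = ∑ j, x j - ∑ j, α j = |n|`. Substituting both into `δ` and using
`z - x j = -(|n| + x j + β)`, the residue `c j = q (x j) / Q' (x j)` contributes
`c j - (|n| + β) * c j / (|n| + x j + β) = c j * x j / (|n| + x j + β)`.
-/

theorem Polynomial.Monic.coeff_sub_natDegree_pred {R : Type*} [Ring R] {p q : R[X]}
    (hp : p.Monic) (hq : q.Monic) (hpq : p.natDegree = q.natDegree) :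
    (p - q).coeff (p.natDegree - 1) = p.nextCoeff - q.nextCoeff := by
  rcases Nat.eq_zero_or_pos p.natDegree with h0 | hpos
  · rw [hp.natDegree_eq_zero.mp h0, hq.natDegree_eq_zero.mp (hpq ▸ h0)]
    simp
  · rw [coeff_sub, nextCoeff_of_natDegree_pos hpos, nextCoeff_of_natDegree_pos (hpq ▸ hpos), hpq]

namespace Lagrange

variable {F ι : Type*} [Field F] {s : Finset ι} {v : ι → F}

theorem degree_sub_nodal_lt {q : F[X]} (hq : q.Monic) (hqd : q.natDegree = #s) :
    (q - nodal s v).degree < #s := by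
  rw [← hqd, ← degree_eq_natDegree hq.ne_zero]
  refine degree_sub_lt_left ?_ hq.ne_zero (by rw [hq.leadingCoeff, nodal_monic.leadingCoeff])
  rw [degree_eq_natDegree hq.ne_zero, degree_nodal, hqd]

variable [DecidableEq ι]

theorem eval_derivative_nodal_at_node {i : ι} (hi : i ∈ s) :
    (nodal s v).derivative.eval (v i) = ∏ j ∈ s.erase i, (v i - v j) := by
  rw [eval_nodal_derivative_eval_node_eq hi, eval_nodal]

theorem eval_div_eval_nodal (hvs : Set.InjOn v s) {q : F[X]} (hq : q.Monic)
    (hqd : q.natDegree = #s) {z : F} (hz : ∀ i ∈ s, z ≠ v i) :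
    q.eval z / (nodal s v).eval z =
      1 + ∑ i ∈ s, q.eval (v i) / (nodal s v).derivative.eval (v i) / (z - v i) := by
  have hQz : (nodal s v).eval z ≠ 0 := eval_nodal_not_at_node hz
  have hinterp := congrArg (eval z) (eq_interpolate hvs (degree_sub_nodal_lt (v := v) hq hqd))
  rw [eval_interpolate_not_at_node _ hz, eval_sub] at hinterp
  rw [div_eq_iff hQz, add_mul, one_mul, ← sub_eq_iff_eq_add', hinterp, mul_comm]
  congr 1
  refine sum_congr rfl fun i hi => ?_
  rw [nodalWeight_eq_eval_derivative_nodal hi, eval_sub, eval_nodal_at_node hi, sub_zero]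
  ring

theorem sum_eval_div_derivative_nodal (hvs : Set.InjOn v s) {q : F[X]} (hq : q.Monic)
    (hqd : q.natDegree = #s) :
    ∑ i ∈ s, q.eval (v i) / (nodal s v).derivative.eval (v i) =
      q.nextCoeff - (nodal s v).nextCoeff := by
  rw [← hq.coeff_sub_natDegree_pred nodal_monic (by rw [hqd, natDegree_nodal]), hqd,
    coeff_eq_sum hvs (degree_sub_nodal_lt hq hqd)]
  refine sum_congr rfl fun i hi => ?_
  rw [eval_derivative_nodal_at_node hi, eval_sub, eval_nodal_at_node hi, sub_zero]

end Lagrange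

theorem neg_mul_one_add_sum_div_add_eq_neg_sum {K ι : Type*} [Field K] (s : Finset ι) (x c : ι → K) (S β : K)
    (hc : ∑ i ∈ s, c i = S) (hx : ∀ i ∈ s, -S - β ≠ x i) :
    -(S + β) * (1 + ∑ i ∈ s, c i / (-S - β - x i)) + β = -∑ i ∈ s, x i * c i / (S + x i + β) := by
  have hterm : ∀ i ∈ s, x i * c i / (S + x i + β) = c i + (S + β) * (c i / (-S - β - x i)) := by
    intro i hi
    have hne : S + x i + β ≠ 0 := fun h => hx i hi (by linear_combination -h)
    rw [show -S - β - x i = -(S + x i + β) by ring]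
    field_simp
    ring
  rw [sum_congr rfl hterm, sum_add_distrib, ← mul_sum, hc]
  ring

theorem stmt_13_general (r : ℕ) (n : Fin r → ℕ) (α : Fin r → ℝ) (β : ℝ)
    (hd : Function.Injective (fun j : Fin r => (n j : ℝ) + α j))
    (q Q : Polynomial ℝ)
    (hq : q = ∏ j : Fin r, (X - C (α j)))
    (hQ : Q = ∏ j : Fin r, (X - C ((n j : ℝ) + α j)))
    (hroot : ∀ j, -(∑ i : Fin r, (n i : ℝ)) - β ≠ (n j : ℝ) + α j)
    (δ : ℝ)
    (hδ : δ = -((∑ i : Fin r, (n i : ℝ)) + β)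
        * q.eval (-(∑ i : Fin r, (n i : ℝ)) - β)
        / Q.eval (-(∑ i : Fin r, (n i : ℝ)) - β) + β) :
    δ = -∑ j : Fin r,
          ((n j : ℝ) + α j) * q.eval ((n j : ℝ) + α j)
            / Q.derivative.eval ((n j : ℝ) + α j)
            / ((∑ i : Fin r, (n i : ℝ)) + (n j : ℝ) + α j + β) := by
  have hQx : Q = Lagrange.nodal univ fun j => (n j : ℝ) + α j := hQ
  have hqm : q.Monic := hq ▸ monic_prod_of_monic _ _ fun j _ => monic_X_sub_C (α j)
  have hqd : q.natDegree = #(univ : Finset (Fin r)) := by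
    rw [hq, natDegree_prod_of_monic _ _ fun j _ => monic_X_sub_C (α j)]
    simp
  have hresidue : ∑ j, q.eval ((n j : ℝ) + α j) / Q.derivative.eval ((n j : ℝ) + α j) =
      ∑ i, (n i : ℝ) := by
    rw [hQx, Lagrange.sum_eval_div_derivative_nodal hd.injOn hqm hqd, Lagrange.nodal_eq, hq,
      prod_X_sub_C_nextCoeff, prod_X_sub_C_nextCoeff, sum_add_distrib]
    ring
  rw [hδ, mul_div_assoc, hQx, Lagrange.eval_div_eval_nodal hd.injOn hqm hqd fun j _ => hroot j,
    ← hQx, neg_mul_one_add_sum_div_add_eq_neg_sum _ _ _ _ _ hresidue fun j _ => hroot j]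
  simp only [mul_div_assoc, add_assoc]

theorem stmt_13 (r : ℕ) (hr : 1 ≤ r) (n : Fin r → ℕ) (α : Fin r → ℝ) (β : ℝ)
    (hd : Function.Injective (fun j : Fin r => (n j : ℝ) + α j))
    (q Q : Polynomial ℝ)
    (hq : q = ∏ j : Fin r, (X - C (α j)))
    (hQ : Q = ∏ j : Fin r, (X - C ((n j : ℝ) + α j)))
    (hroot : ∀ j, -(∑ i : Fin r, (n i : ℝ)) - β ≠ (n j : ℝ) + α j)
    (hden : ∀ j, (∑ i : Fin r, (n i : ℝ)) + (n j : ℝ) + α j + β ≠ 0)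
    (δ : ℝ)
    (hδ : δ = -((∑ i : Fin r, (n i : ℝ)) + β)
        * q.eval (-(∑ i : Fin r, (n i : ℝ)) - β)
        / Q.eval (-(∑ i : Fin r, (n i : ℝ)) - β) + β) :
    δ = -∑ j : Fin r,
          ((n j : ℝ) + α j) * q.eval ((n j : ℝ) + α j)
            / Q.derivative.eval ((n j : ℝ) + α j)
            / ((∑ i : Fin r, (n i : ℝ)) + (n j : ℝ) + α j + β) :=
  stmt_13_general r n α β hd q Q hq hQ hroot δ hδ
end

section
/- For multiple Laguerre polynomials of the first kind with b_{n,k} = |n| + n_k + α_k + 1 and a_{n,j} = n_j(n_j+α_j) ∏_{i≠j} (n_j+α_j−α_i)/(n_j−n_i+α_j−α_i), the first compatibility relation holds: for all i ≠ j, b_{n+e_i,j} − b_{n,j} = b_{n+e_j,i} − b_{n,i} (both sides equal 1), and the third compatibility relation a_{n,i}·(b_{n,j} − b_{n,i}) = a_{n+e_j,i}·(b_{n−e_i,j} − b_{n−e_i,i}) holds whenever n_i ≥ 1 and all denominators n_i − n_k + α_i − α_k (k ≠ i, at the relevant shifted indices) are nonzero. -/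
open Finset

theorem stmt_17 (r : ℕ) (α : Fin r → ℝ)
    (hα : ∀ i j : Fin r, i ≠ j → ∀ z : ℤ, α i - α j ≠ (z : ℝ))
    (b a : (Fin r → ℕ) → Fin r → ℝ)
    (hb : ∀ (n : Fin r → ℕ) k, b n k = (∑ l, (n l : ℝ)) + (n k : ℝ) + α k + 1)
    (ha : ∀ (n : Fin r → ℕ) j, a n j =
      (n j : ℝ) * ((n j : ℝ) + α j) *
        ∏ i ∈ Finset.univ.erase j,
          ((n j : ℝ) + α j - α i) / ((n j : ℝ) - (n i : ℝ) + α j - α i))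
    (n : Fin r → ℕ) (i j : Fin r) (hij : i ≠ j) :
    (b (add1 n i) j - b n j = 1 ∧ b (add1 n j) i - b n i = 1) ∧
    (1 ≤ n i → a n i * (b n j - b n i)
      = a (add1 n j) i * (b (sub1 n i) j - b (sub1 n i) i)) := by
  have hji : j ≠ i := hij.symm
  refine ⟨⟨?_, ?_⟩, ?_⟩
  · rw [hb, hb]
    simp [add1, hji, Finset.sum_add_distrib]

  · rw [hb, hb]
    simp [add1, hij, Finset.sum_add_distrib]

  · intro hni
    have hDi : ((n i : ℝ) - (n j : ℝ) + α i - α j) ≠ 0 := by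
      intro h
      exact hα i j hij ((n j : ℤ) - (n i : ℤ)) (by push_cast; linarith)
    have hDi1 : ((n i : ℝ) - ((n j : ℝ) + 1) + α i - α j) ≠ 0 := by
      intro h
      exact hα i j hij ((n j : ℤ) + 1 - (n i : ℤ)) (by push_cast; linarith)
    rw [ha, ha, hb, hb, hb, hb]
    have hjmem : j ∈ Finset.univ.erase i := Finset.mem_erase.mpr ⟨hji, Finset.mem_univ j⟩
    rw [← Finset.mul_prod_erase _ _ hjmem, ← Finset.mul_prod_erase _ _ hjmem]
    have hP : ∏ k ∈ (Finset.univ.erase i).erase j,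
        (((add1 n j) i : ℝ) + α i - α k) /
          (((add1 n j) i : ℝ) - ((add1 n j) k : ℝ) + α i - α k)
        = ∏ k ∈ (Finset.univ.erase i).erase j,
        ((n i : ℝ) + α i - α k) / ((n i : ℝ) - (n k : ℝ) + α i - α k) := by
      refine Finset.prod_congr rfl fun k hk => ?_
      have hk' := Finset.mem_erase.mp hk
      simp [add1, hij, hk'.1]
    rw [hP]
    have hai : ((add1 n j) i : ℝ) = (n i : ℝ) := by simp [add1, hij]
    have haj : ((add1 n j) j : ℝ) = (n j : ℝ) + 1 := by simp [add1]
    have hsi : ((sub1 n i) i : ℝ) = (n i : ℝ) - 1 := by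
      simp only [sub1, if_pos rfl]
      push_cast [Nat.cast_sub hni]
      ring
    have hsj : ((sub1 n i) j : ℝ) = (n j : ℝ) := by simp [sub1, hji]
    rw [hai, haj, hsi, hsj]
    set P := ∏ k ∈ (Finset.univ.erase i).erase j,
        ((n i : ℝ) + α i - α k) / ((n i : ℝ) - (n k : ℝ) + α i - α k)
    field_simp
    ring
end
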